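/- arXiv:2511.06162 — 2 statements merged into one kernel-verified Lean document; each statement's English description precedes it below -/
import Mathlib

section
/- Let (T, L, c, r) be a rooted WDTAP instance in which every link is an up-link or a down-link. For every subset B of the tree arcs there exists a signing σ: B → {−1, +1} such that for every link ℓ ∈ L, the sum Σ_{a ∈ cov⃗(ℓ) ∩ B} σ(a) lies in {−1, 0, 1}. Consequently (by the Ghouila-Houri criterion) the arc-link-coverage matrix is totally unimodular. -/
open scoped Classical

/-- A tree on vertex set `V`, rooted at `root`, encoded via the parent function.
Every non-root vertex `z` corresponds to the unique tree edge/arc `a_z` between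
`z` and `parent z`. -/
structure ArcTree (V : Type*) where
  root : V
  parent : V → V
  parent_root : parent root = root
  reaches_root : ∀ v : V, ∃ n : ℕ, parent^[n] v = root

namespace ArcTree

variable {V : Type*}

/-- `x` is an ancestor of `y` (possibly `x = y`). -/
def anc (T : ArcTree V) (x y : V) : Prop := ∃ n : ℕ, T.parent^[n] y = x

/-- The arc `a_z` (between `z` and `parent z`, for `z ≠ root`) lies on the
tree path between `u` and `v`. -/
def arcOnPath (T : ArcTree V) (u v z : V) : Prop :=
  z ≠ T.root ∧ ¬ (T.anc z u ↔ T.anc z v)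

/-- The vertex `x` lies on the tree path between `u` and `v`. -/
def onPath (T : ArcTree V) (u v x : V) : Prop :=
  (T.anc x u ∨ T.anc x v) ∧ ∀ z, T.anc z u → T.anc z v → T.anc z x

/-- `x` is an inner vertex of the tree path between `u` and `v`. -/
def innerOnPath (T : ArcTree V) (u v x : V) : Prop :=
  T.onPath u v x ∧ x ≠ u ∧ x ≠ v

/-- `w` is the least common ancestor of `u` and `v`. -/
def isLca (T : ArcTree V) (u v w : V) : Prop :=
  T.anc w u ∧ T.anc w v ∧ ∀ z, T.anc z u → T.anc z v → T.anc z w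

end ArcTree

section Cover

variable {V : Type*}

/- Orientation convention: `up z = true` means the arc `a_z` is directed from `z` to
`parent z` (an up-arc, pointing towards the root); `up z = false` means it is directed
from `parent z` to `z` (a down-arc). -/

/-- The directed link `ℓ = (u, v)` covers the arc `a_z`, i.e. `a_z` is a backward arc
of the tree path from `u` to `v` (equivalently, the walk from `v` back to `u`
traverses `a_z` in its forward direction). -/
def covers (T : ArcTree V) (up : V → Bool) (ℓ : V × V) (z : V) : Prop :=
  z ≠ T.root ∧
    ((T.anc z ℓ.2 ∧ ¬ T.anc z ℓ.1 ∧ up z = true) ∨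
     (T.anc z ℓ.1 ∧ ¬ T.anc z ℓ.2 ∧ up z = false))

/-- The link `ℓ = (u,v)` covers the arc `a_z` in the wrong direction, i.e. `a_z` is a
forward arc of the tree path from `u` to `v`. -/
def wcovers (T : ArcTree V) (up : V → Bool) (ℓ : V × V) (z : V) : Prop :=
  z ≠ T.root ∧
    ((T.anc z ℓ.1 ∧ ¬ T.anc z ℓ.2 ∧ up z = true) ∨
     (T.anc z ℓ.2 ∧ ¬ T.anc z ℓ.1 ∧ up z = false))

/-- `ℓ'` is a shadow of `ℓ`: the endpoints of `ℓ'` lie, in this order, on the tree path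
of `ℓ`. -/
def IsShadow (T : ArcTree V) (ℓ ℓ' : V × V) : Prop :=
  T.onPath ℓ.1 ℓ.2 ℓ'.1 ∧ T.onPath ℓ'.1 ℓ.2 ℓ'.2

/-- `x` is an inner vertex of the path of the generic shadow of `ℓ` (the minimal shadow
with the same directed coverage): `x` lies on `P_ℓ` and `ℓ` covers arcs on both sides
of `x`. -/
def innerGeneric (T : ArcTree V) (up : V → Bool) (ℓ : V × V) (x : V) : Prop :=
  T.onPath ℓ.1 ℓ.2 x ∧
    (∃ z, covers T up ℓ z ∧ T.arcOnPath ℓ.1 x z) ∧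
    (∃ z, covers T up ℓ z ∧ T.arcOnPath x ℓ.2 z)

/-- The arc `a_z` (lying in the subtree of `v`) is visible to `v` with respect to the
link set `L'`. -/
def visibleArc (T : ArcTree V) (up : V → Bool) (L' : Set (V × V)) (v z : V) : Prop :=
  T.anc v z ∧ z ≠ v ∧ ∃ ℓ ∈ L', covers T up ℓ z ∧ innerGeneric T up ℓ v

/-- A set of arcs (encoded by their lower endpoints) is ancestor-free: no arc of the
set lies on the path from another arc's apex (top endpoint) to the root. -/
def AncestorFree (T : ArcTree V) (S : Set V) : Prop :=
  ∀ z ∈ S, ∀ z' ∈ S, z ≠ z' → ¬ T.anc z' (T.parent z)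

/-- The visible up-width of `v` w.r.t. the link set `L'` is at most `k`. -/
def upWidthLE (T : ArcTree V) (up : V → Bool) (L' : Set (V × V)) (v : V) (k : ℕ) : Prop :=
  ∀ S : Finset V, AncestorFree T (S : Set V) →
    (∀ z ∈ S, up z = true ∧ visibleArc T up L' v z) → S.card ≤ k

/-- The visible down-width of `v` w.r.t. the link set `L'` is at most `k`. -/
def downWidthLE (T : ArcTree V) (up : V → Bool) (L' : Set (V × V)) (v : V) (k : ℕ) : Prop :=
  ∀ S : Finset V, AncestorFree T (S : Set V) →
    (∀ z ∈ S, up z = false ∧ visibleArc T up L' v z) → S.card ≤ k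

/-- The link `ℓ` points into the subtree `T_v`. -/
def pointsInto (T : ArcTree V) (v : V) (ℓ : V × V) : Prop :=
  T.anc v ℓ.2 ∧ ℓ.2 ≠ v ∧ ¬ T.anc v ℓ.1

/-- The link `ℓ` points out of the subtree `T_v`. -/
def pointsOut (T : ArcTree V) (v : V) (ℓ : V × V) : Prop :=
  T.anc v ℓ.1 ∧ ℓ.1 ≠ v ∧ ¬ T.anc v ℓ.2

/-- `v` is up-independent w.r.t. the link set `L'`: every link either covers no up-arc
of the subtree `T_v`, or its whole coverage lies inside `T_v`. -/
def upIndep (T : ArcTree V) (up : V → Bool) (L' : Set (V × V)) (v : V) : Prop :=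
  ∀ ℓ ∈ L', (¬ ∃ z, covers T up ℓ z ∧ T.anc v z ∧ z ≠ v ∧ up z = true) ∨
    (∀ z, covers T up ℓ z → T.anc v z ∧ z ≠ v)

/-- `v` is down-independent w.r.t. the link set `L'`. -/
def downIndep (T : ArcTree V) (up : V → Bool) (L' : Set (V × V)) (v : V) : Prop :=
  ∀ ℓ ∈ L', (¬ ∃ z, covers T up ℓ z ∧ T.anc v z ∧ z ≠ v ∧ up z = false) ∨
    (∀ z, covers T up ℓ z → T.anc v z ∧ z ≠ v)

/-- A feasible (integral) solution: every arc is covered by some link of `F`. -/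
def Feasible (T : ArcTree V) (up : V → Bool) (F : Finset (V × V)) : Prop :=
  ∀ z, z ≠ T.root → ∃ ℓ ∈ F, covers T up ℓ z

/-- `F` is shadow-minimal: no link of `F` can be replaced by a proper shadow while
maintaining feasibility. -/
def ShadowMinimal (T : ArcTree V) (up : V → Bool) (F : Finset (V × V)) : Prop :=
  ∀ ℓ ∈ F, ∀ ℓ' : V × V, IsShadow T ℓ ℓ' → ℓ' ≠ ℓ →
    ¬ Feasible T up (insert ℓ' (F.erase ℓ))

/-- A splitting of the link set: each link is mapped to a set of shadows whose tree
paths partition the arc set of its tree path. -/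
def IsSplitting (T : ArcTree V) (σ : V × V → Finset (V × V)) : Prop :=
  ∀ ℓ : V × V,
    (σ ℓ).Nonempty ∧
    (∀ ℓ' ∈ σ ℓ, IsShadow T ℓ ℓ' ∧ (ℓ'.1 ≠ ℓ'.2 ∨ ℓ' = ℓ)) ∧
    (∀ z, T.arcOnPath ℓ.1 ℓ.2 z ↔ ∃ ℓ' ∈ σ ℓ, T.arcOnPath ℓ'.1 ℓ'.2 z) ∧
    (∀ ℓ₁ ∈ σ ℓ, ∀ ℓ₂ ∈ σ ℓ, ℓ₁ ≠ ℓ₂ →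
      ∀ z, T.arcOnPath ℓ₁.1 ℓ₁.2 z → ¬ T.arcOnPath ℓ₂.1 ℓ₂.2 z)

/-- The LP solution obtained from `x` by applying the splitting `σ`. -/
noncomputable def splitSol [Fintype V] (σ : V × V → Finset (V × V)) (x : V × V → ℝ) :
    V × V → ℝ :=
  fun ℓ' => ∑ ℓ : V × V, if ℓ' ∈ σ ℓ then x ℓ else 0

/-- `x` is a feasible solution of the WDTAP set-covering LP. -/
def FeasLP [Fintype V] (T : ArcTree V) (up : V → Bool) (x : V × V → ℝ) : Prop :=
  (∀ ℓ, 0 ≤ x ℓ) ∧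
    ∀ z, z ≠ T.root → 1 ≤ ∑ ℓ : V × V, if covers T up ℓ z then x ℓ else 0

end Cover

/-!
Order the vertices by ancestry, making vertices of different orientation incomparable. This is
a forest order (the points below any vertex form a chain), and the arcs covered by an up- or
down-link form an order-convex chain in it.

Signing: give `z ∈ B` the sign `(-1) ^ k`, where `k` counts the elements of `B` below `z`. Along
a convex chain these signs alternate, so the signed sum over it lies in `{-1, 0, 1}`.

Total unimodularity: in a square submatrix take the row of a maximal point `x`. The columns
through `x`, cut down to `Iic x`, are nested; subtracting the smallest one from the others
leaves columns of the same kind and turns the row of `x` into a unit vector, so Laplace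
expansion along it completes an induction on the size.
-/

open Finset Set Matrix

section ForestOrder

variable {α : Type*} [Preorder α]

lemma le_of_le_of_notMem_of_isChain (hforest : ∀ x : α, IsChain (· ≤ ·) (Iic x)) {C : Set α}
    (hchain : IsChain (· ≤ ·) C) (hC : C.OrdConnected) {y z w : α} (hz : z ∈ C) (hy : y ∈ C)
    (hw : w ∉ C) (hwz : w ≤ z) : w ≤ y := by
  rcases hchain.total hy hz with hyz | hzy
  · rcases (hforest z).total (show w ∈ Iic z from hwz) (show y ∈ Iic z from hyz) with hwy | hyw
    · exact hwy
    · exact absurd (hC.out hy hz ⟨hyw, hwz⟩) hw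
  · exact hwz.trans hzy

lemma inter_Iic_subset_or_subset {x : α} (hx : IsChain (· ≤ ·) (Iic x)) {C C₀ : Set α}
    (hC : C.OrdConnected) (hC₀ : C₀.OrdConnected) (hxC : x ∈ C) (hxC₀ : x ∈ C₀) :
    C ∩ Iic x ⊆ C₀ ∩ Iic x ∨ C₀ ∩ Iic x ⊆ C ∩ Iic x := by
  by_contra! h
  obtain ⟨y, hy, hy₀⟩ := Set.not_subset.1 h.1
  obtain ⟨y₀, hy₀', hy'⟩ := Set.not_subset.1 h.2
  rcases hx.total hy.2 hy₀'.2 with hle | hle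
  · exact hy' ⟨hC.out hy.1 hxC ⟨hle, hy₀'.2⟩, hy₀'.2⟩
  · exact hy₀ ⟨hC₀.out hy₀'.1 hxC₀ ⟨hle, hy.2⟩, hy.2⟩

lemma Set.OrdConnected.inter_Iic_diff {C C₀ : Set α} (hC : C.OrdConnected) (hC₀ : C₀.OrdConnected)
    {x : α} (hx : x ∈ C₀) : ((C ∩ Iic x) \ C₀).OrdConnected :=
  ⟨fun _ hy₁ _ hy₂ _ hy =>
    ⟨(hC.inter ordConnected_Iic).out hy₁.1 hy₂.1 hy,
      fun hyC₀ => hy₂.2 (hC₀.out hyC₀ hx ⟨hy.2, hy₂.1.2⟩)⟩⟩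

end ForestOrder

section Signing

variable {α : Type*} [PartialOrder α]

lemma two_mul_sum_neg_one_pow_card_filter_le {D : Finset α} (hD : IsChain (· ≤ ·) (D : Set α)) :
    2 * ∑ z ∈ D, (-1 : ℤ) ^ #{z' ∈ D | z' ≤ z} = (-1) ^ #D - 1 := by
  induction D using Finset.strongInduction with
  | H D ih =>
  rcases D.eq_empty_or_nonempty with rfl | hne
  · simp
  obtain ⟨m, hmD, hmax⟩ := D.exists_maximal hne
  have hle : ∀ z ∈ D, z ≤ m := fun z hz => (hD.total hz hmD).elim id (hmax hz)
  have htop : #{z' ∈ D | z' ≤ m} = #D := by rw [filter_true_of_mem hle]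
  have hrest : ∀ z ∈ D.erase m, #{z' ∈ D | z' ≤ z} = #{z' ∈ D.erase m | z' ≤ z} := by
    intro z hz
    rw [filter_erase, erase_eq_of_notMem]
    exact fun hm => (mem_erase.1 hz).1 (le_antisymm (hle z (mem_erase.1 hz).2) (mem_filter.1 hm).2)
  have ih' := ih _ (erase_ssubset hmD) (hD.mono (coe_subset.2 (erase_subset m D)))
  rw [← sum_erase_add _ _ hmD, htop, sum_congr rfl fun z hz => by rw [hrest z hz],
    ← card_erase_add_one hmD, pow_succ]
  linear_combination ih'

lemma sum_neg_one_pow_card_filter_le_mem (hforest : ∀ x : α, IsChain (· ≤ ·) (Iic x))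
    (B : Finset α) {C : Set α} (hchain : IsChain (· ≤ ·) C) (hC : C.OrdConnected) :
    ∑ z ∈ B with z ∈ C, (-1 : ℤ) ^ #{z' ∈ B | z' ≤ z} ∈ ({-1, 0, 1} : Set ℤ) := by
  set D := {z ∈ B | z ∈ C}
  rcases D.eq_empty_or_nonempty with hD | ⟨z₀, hz₀⟩
  · simp [D, hD]
  have hDC : ∀ z ∈ D, z ∈ C := fun z hz => (mem_filter.1 hz).2
  -- the elements of `B` below `z ∈ D` are those of `D` below `z`, plus a fixed set below `D`
  have hout : ∀ z ∈ D, {z' ∈ B | z' ≤ z ∧ z' ∉ C} = {z' ∈ B | z' ≤ z₀ ∧ z' ∉ C} :=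
    fun z hz => filter_congr fun z' _ =>
      ⟨fun h => ⟨le_of_le_of_notMem_of_isChain hforest hchain hC (hDC z hz) (hDC z₀ hz₀) h.2 h.1,
        h.2⟩,
      fun h => ⟨le_of_le_of_notMem_of_isChain hforest hchain hC (hDC z₀ hz₀) (hDC z hz) h.2 h.1,
        h.2⟩⟩
  have hsplit : ∀ z ∈ D,
      #{z' ∈ B | z' ≤ z} = #{z' ∈ B | z' ≤ z₀ ∧ z' ∉ C} + #{z' ∈ D | z' ≤ z} := by
    intro z hz
    rw [← card_filter_add_card_filter_not (· ∉ C), filter_filter, filter_filter, hout z hz,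
      filter_filter]
    simp only [not_not, and_comm]
  have hD := two_mul_sum_neg_one_pow_card_filter_le (hchain.mono fun z hz => hDC z hz)
  rw [sum_congr rfl fun z hz => by rw [hsplit z hz, pow_add], ← mul_sum]
  rcases neg_one_pow_eq_or ℤ #{z' ∈ B | z' ≤ z₀ ∧ z' ∉ C} with h | h <;>
    rcases neg_one_pow_eq_or ℤ #D with h' | h' <;> rw [h] <;> rw [h'] at hD <;>
    simp only [Set.mem_insert_iff, Set.mem_singleton_iff] <;> omega

lemma exists_signing [Fintype α] (hforest : ∀ x : α, IsChain (· ≤ ·) (Iic x)) (B : Set α) :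
    ∃ sg : α → ℤ, (∀ z ∈ B, sg z = 1 ∨ sg z = -1) ∧
      ∀ C : Set α, IsChain (· ≤ ·) C → C.OrdConnected →
        (∑ z, if z ∈ B ∧ z ∈ C then sg z else 0) ∈ ({-1, 0, 1} : Set ℤ) := by
  refine ⟨fun z => (-1) ^ #{z' | z' ∈ B ∧ z' ≤ z}, fun z _ => neg_one_pow_eq_or ℤ _,
    fun C hchain hC => ?_⟩
  convert sum_neg_one_pow_card_filter_le_mem hforest {z | z ∈ B} hchain hC using 1
  rw [sum_filter, sum_filter]
  simp [ite_and, filter_filter]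

end Signing

section Unimodular

variable {R : Type*} [CommRing R]

lemma Matrix.det_mem_range_of_row_eq_single {k : ℕ} {A : Matrix (Fin (k + 1)) (Fin (k + 1)) R}
    {i j : Fin (k + 1)} (hrow : A i = Pi.single j 1)
    (hminor : (A.submatrix i.succAbove j.succAbove).det ∈ Set.range SignType.cast) :
    A.det ∈ Set.range SignType.cast := by
  rw [det_succ_row A i, Fintype.sum_eq_single j fun j' hj' => by simp [hrow, hj'], hrow,
    Pi.single_eq_same, mul_one]
  change _ ∈ MonoidHom.mrange SignType.castHom.toMonoidHom
  exact mul_mem (pow_mem (MonoidHom.mem_mrange.2 ⟨-1, by simp⟩) _) hminor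

variable {α m n : Type*} [Preorder α]

lemma ite_mem_eq_ite_mem_diff_add {x y : α} {C C₀ : Set α} (hyx : y ∈ C → y ≤ x)
    (hC₀ : y ∈ C₀ → y ∈ C) :
    (if y ∈ C then (1 : R) else 0) =
      (if y ∈ (C ∩ Iic x) \ C₀ then 1 else 0) + if y ∈ C₀ then 1 else 0 := by
  by_cases hy₀ : y ∈ C₀
  · simp [hy₀, hC₀ hy₀]
  · by_cases hy : y ∈ C <;> simp [hy, hy₀, hyx]

variable (R) in
noncomputable def Matrix.memMatrix (f : m → α) (C : n → Set α) : Matrix m n R :=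
  of fun i j => if f i ∈ C j then 1 else 0

lemma Matrix.exists_memMatrix_row_eq_single [Fintype n] [DecidableEq n]
    (hforest : ∀ x : α, IsChain (· ≤ ·) (Iic x)) (f : n → α) (C : n → Set α) (hchain : ∀ j, IsChain (· ≤ ·) (C j))
    (hconn : ∀ j, (C j).OrdConnected) {i₀ : n} (hmax : ∀ i, f i₀ ≤ f i → f i ≤ f i₀) {j : n}
    (hj : f i₀ ∈ C j) :
    ∃ j₀ C', (∀ j, IsChain (· ≤ ·) (C' j)) ∧ (∀ j, (C' j).OrdConnected) ∧
      memMatrix R f C' i₀ = Pi.single j₀ 1 ∧ (memMatrix R f C).det = (memMatrix R f C').det := by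
  have hbelow : ∀ i j, f i₀ ∈ C j → f i ∈ C j → f i ≤ f i₀ := fun i j hx hi =>
    ((hchain j).total hi hx).elim id (hmax i)
  obtain ⟨j₀, hj₀, hmin⟩ := Finset.exists_minimalFor (fun j => C j ∩ Iic (f i₀))
    {j | f i₀ ∈ C j} ⟨j, by simpa using hj⟩
  replace hj₀ : f i₀ ∈ C j₀ := (mem_filter.1 hj₀).2
  have hsub : ∀ j, f i₀ ∈ C j → C j₀ ∩ Iic (f i₀) ⊆ C j := fun j hj =>
    ((inter_Iic_subset_or_subset (hforest (f i₀)) (hconn j₀) (hconn j) hj₀ hj).elim id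
      fun h => hmin (by simpa using hj) h).trans inter_subset_left
  -- subtract column `j₀` from every other column through `f i₀`
  obtain ⟨C', hC'⟩ : ∃ C' : n → Set α,
      ∀ j, C' j = if f i₀ ∈ C j ∧ j ≠ j₀ then (C j ∩ Iic (f i₀)) \ C j₀ else C j :=
    ⟨_, fun _ => rfl⟩
  have hC'₀ : C' j₀ = C j₀ := by simp [hC']
  have hcol : ∀ i j, memMatrix R f C i j =
      memMatrix R f C' i j + (if f i₀ ∈ C j ∧ j ≠ j₀ then 1 else 0) * memMatrix R f C' i j₀ := by
    intro i j
    simp only [memMatrix, of_apply, hC'₀, hC' j]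
    by_cases hj : f i₀ ∈ C j ∧ j ≠ j₀
    · rw [if_pos hj, if_pos hj, one_mul]
      convert ite_mem_eq_ite_mem_diff_add (hbelow i j hj.1)
        fun hi => hsub j hj.1 ⟨hi, hbelow i j₀ hj₀ hi⟩
    · rw [if_neg hj, if_neg hj, zero_mul, add_zero]
  refine ⟨j₀, C', fun j => ?_, fun j => ?_, ?_, ?_⟩
  · rw [hC']
    split_ifs
    exacts [(hchain j).mono (sdiff_subset.trans inter_subset_left), hchain j]
  · rw [hC']
    split_ifs
    exacts [(hconn j).inter_Iic_diff (hconn j₀) hj₀, hconn j]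
  · ext j
    rcases eq_or_ne j j₀ with rfl | hj
    · simp [memMatrix, hC'₀, hj₀]
    · by_cases hj' : f i₀ ∈ C j <;> simp [memMatrix, hC' j, hj, hj', hj₀]
  · rw [← det_transpose, ← det_transpose (memMatrix R f C')]
    exact det_eq_of_forall_row_eq_smul_add_const _ j₀ (by simp) fun j i => hcol i j

theorem Matrix.det_memMatrix_mem_range (hforest : ∀ x : α, IsChain (· ≤ ·) (Iic x)) :
    ∀ {k : ℕ} (f : Fin k → α) (C : Fin k → Set α), (∀ j, IsChain (· ≤ ·) (C j)) →
      (∀ j, (C j).OrdConnected) → (memMatrix R f C).det ∈ Set.range SignType.cast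
  | 0, _, _, _, _ => ⟨1, by simp⟩
  | k + 1, f, C, hchain, hconn => by
    obtain ⟨i₀, -, hmax⟩ := (univ : Finset (Fin (k + 1))).exists_maximalFor f univ_nonempty
    by_cases hJ : ∃ j, f i₀ ∈ C j
    · obtain ⟨j, hj⟩ := hJ
      obtain ⟨j₀, C', hchain', hconn', hrow, hdet⟩ :=
        exists_memMatrix_row_eq_single (R := R) hforest f C hchain hconn
          (fun i => hmax (mem_univ i)) hj
      rw [hdet]
      exact det_mem_range_of_row_eq_single hrow <| det_memMatrix_mem_range hforest _
        (C' ∘ j₀.succAbove) (fun _ => hchain' _) fun _ => hconn' _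
    · push Not at hJ
      exact ⟨0, (det_eq_zero_of_row_eq_zero i₀ fun j => if_neg (hJ j)).symm⟩

theorem Matrix.isTotallyUnimodular_memMatrix (hforest : ∀ x : α, IsChain (· ≤ ·) (Iic x))
    (f : m → α) (C : n → Set α) (hchain : ∀ j, IsChain (· ≤ ·) (C j))
    (hconn : ∀ j, (C j).OrdConnected) : (memMatrix R f C).IsTotallyUnimodular :=
  fun _ g h _ _ => det_memMatrix_mem_range hforest (f ∘ g) (C ∘ h) (fun _ => hchain _)
    fun _ => hconn _

end Unimodular

namespace ArcTree

variable {V : Type*} (T : ArcTree V)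

lemma anc_refl (x : V) : T.anc x x := ⟨0, rfl⟩

variable {T} in
lemma anc_trans {x y z : V} (hxy : T.anc x y) (hyz : T.anc y z) : T.anc x z := by
  obtain ⟨n, rfl⟩ := hxy
  obtain ⟨m, rfl⟩ := hyz
  exact ⟨n + m, Function.iterate_add_apply _ _ _ _⟩

lemma anc_root (v : V) : T.anc T.root v := T.reaches_root v

lemma eq_root_of_isPeriodicPt {p : ℕ} {y : V} (hy : Function.IsPeriodicPt T.parent p y)
    (hp : 0 < p) : y = T.root := by
  obtain ⟨d, hd⟩ := T.reaches_root y
  calc y = T.parent^[p * d - d + d] y := by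
          rw [Nat.sub_add_cancel (Nat.le_mul_of_pos_left d hp)]; exact (hy.mul_const d).symm
    _ = T.root := by rw [Function.iterate_add_apply, hd, Function.iterate_fixed T.parent_root]

variable {T} in
lemma anc_antisymm {x y : V} (hxy : T.anc x y) (hyx : T.anc y x) : x = y := by
  obtain ⟨n, rfl⟩ := hxy
  obtain ⟨m, hm⟩ := hyx
  rcases Nat.eq_zero_or_pos n with rfl | hn
  · rfl
  have hy := T.eq_root_of_isPeriodicPt (p := m + n) (by
    rw [Function.IsPeriodicPt, Function.IsFixedPt, Function.iterate_add_apply, hm]) (by omega)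
  rw [hy, Function.iterate_fixed T.parent_root]

variable {T} in
lemma anc_total_of_anc {x y w : V} (hx : T.anc x w) (hy : T.anc y w) : T.anc x y ∨ T.anc y x := by
  obtain ⟨n, rfl⟩ := hx
  obtain ⟨m, rfl⟩ := hy
  rcases le_total n m with h | h
  · exact .inr ⟨m - n, by rw [← Function.iterate_add_apply, Nat.sub_add_cancel h]⟩
  · exact .inl ⟨n - m, by rw [← Function.iterate_add_apply, Nat.sub_add_cancel h]⟩

/-- The vertices of `T`, ordered by ancestry between vertices of equal orientation `up`
(an ancestor is smaller); vertices of different orientation are incomparable. -/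
def AncOrder (_ : ArcTree V) (_ : V → Bool) : Type _ := V

variable (up : V → Bool)

instance [Fintype V] : Fintype (T.AncOrder up) := ‹Fintype V›

instance : PartialOrder (T.AncOrder up) where
  le x y := T.anc x y ∧ up x = up y
  le_refl x := ⟨T.anc_refl x, rfl⟩
  le_trans _ _ _ hxy hyz := ⟨anc_trans hxy.1 hyz.1, hxy.2.trans hyz.2⟩
  le_antisymm _ _ hxy hyx := anc_antisymm hxy.1 hyx.1

lemma isChain_Iic (x : T.AncOrder up) : IsChain (· ≤ ·) (Iic x) := fun _ hy _ hz _ =>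
  (anc_total_of_anc hy.1 hz.1).imp (⟨·, hy.2.trans hz.2.symm⟩) (⟨·, hz.2.trans hy.2.symm⟩)

variable {T up}

lemma covers_iff {ℓ : V × V} {z : V} :
    covers T up ℓ z ↔
      T.anc z (bif up z then ℓ.2 else ℓ.1) ∧ ¬ T.anc z (bif up z then ℓ.1 else ℓ.2) := by
  have hroot : ∀ w, ¬ T.anc z w → z ≠ T.root := fun w h hz => h (hz ▸ T.anc_root w)
  cases h : up z <;> simp [covers, h] <;> exact fun _ h' => hroot _ h'

lemma ordConnected_covers (ℓ : V × V) : {z : T.AncOrder up | covers T up ℓ z}.OrdConnected := by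
  refine ⟨fun a ha b hb y ⟨hay, hyb⟩ => covers_iff.2 ?_⟩
  have ha' := covers_iff.1 ha
  have hb' := covers_iff.1 hb
  rw [← hay.2]
  rw [← hyb.2, ← hay.2] at hb'
  exact ⟨anc_trans hyb.1 hb'.1, fun h => ha'.2 (anc_trans hay.1 h)⟩

lemma isChain_covers {ℓ : V × V} (hℓ : T.anc ℓ.2 ℓ.1 ∨ T.anc ℓ.1 ℓ.2) :
    IsChain (· ≤ ·) {z : T.AncOrder up | covers T up ℓ z} := by
  obtain ⟨w, b, hw⟩ : ∃ w b, ∀ z, covers T up ℓ z → T.anc z w ∧ up z = b := by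
    rcases hℓ with h | h
    · refine ⟨ℓ.1, false, fun z hz => ?_⟩
      rcases hz with ⟨-, ⟨h₁, h₂, -⟩ | ⟨h₁, -, h₃⟩⟩
      · exact absurd (anc_trans h₁ h) h₂
      · exact ⟨h₁, h₃⟩
    · refine ⟨ℓ.2, true, fun z hz => ?_⟩
      rcases hz with ⟨-, ⟨h₁, -, h₃⟩ | ⟨h₁, h₂, -⟩⟩
      · exact ⟨h₁, h₃⟩
      · exact absurd (anc_trans h₁ h) h₂
  intro y hy z hz _
  have hyz : up y = up z := ((hw y hy).2).trans (hw z hz).2.symm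
  exact (anc_total_of_anc (hw y hy).1 (hw z hz).1).imp (⟨·, hyz⟩) (⟨·, hyz.symm⟩)

end ArcTree

/-- If every link is an up-link or a down-link, then every subset `B`
of the tree arcs admits a `±1` signing under which every link's signed covered sum lies
in `{-1, 0, 1}`; consequently (Ghouila-Houri) the arc-link-coverage matrix is totally
unimodular. -/
theorem up_down_links_signing_and_TU {V : Type*} [Fintype V]
    (T : ArcTree V) (up : V → Bool)
    (Lk : Type*) (ends : Lk → V × V)
    (hL : ∀ ℓ : Lk, T.anc (ends ℓ).2 (ends ℓ).1 ∨ T.anc (ends ℓ).1 (ends ℓ).2)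
    (M : Matrix {z : V // z ≠ T.root} Lk ℚ)
    (hM : ∀ a ℓ, M a ℓ = if covers T up (ends ℓ) a.1 then 1 else 0) :
    (∀ B : Set V, ∃ sg : V → ℤ, (∀ z ∈ B, sg z = 1 ∨ sg z = -1) ∧
      ∀ ℓ : Lk,
        (∑ z : V, if z ∈ B ∧ covers T up (ends ℓ) z then sg z else 0)
          ∈ ({-1, 0, 1} : Set ℤ)) ∧
    M.IsTotallyUnimodular := by
  have hchain ℓ := ArcTree.isChain_covers (up := up) (hL ℓ)
  refine ⟨fun B => ?_, ?_⟩
  · obtain ⟨sg, hsg, hsum⟩ := exists_signing (T.isChain_Iic up) (B : Set (T.AncOrder up))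
    exact ⟨sg, hsg, fun ℓ => hsum _ (hchain ℓ) (ArcTree.ordConnected_covers _)⟩
  · have hM' : M = memMatrix ℚ (Subtype.val : _ → T.AncOrder up)
        fun ℓ => {z | covers T up (ends ℓ) z} := by
      ext a ℓ
      exact hM a ℓ
    rw [hM']
    exact isTotallyUnimodular_memMatrix (T.isChain_Iic up) _ _ hchain
      fun _ => ArcTree.ordConnected_covers _
end

section
/- For any splitting σ of the link set and any subset A' of tree arcs, the inequality Σ_{ℓ ∈ L} (Σ_{ℓ' ∈ σ(ℓ)} c(ℓ')) · x_ℓ ≥ c(OPT(T/A', supp(σ)/A', c)) is valid for the integer hull of the WDTAP set-covering LP, where OPT denotes an optimal solution of the WDTAP instance obtained by contracting the arcs A' and restricting the links to the supports of σ. -/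
open scoped Classical

theorem Finset.exists_mem_eq_one_of_one_le_sum_ite {ι : Type*} (s : Finset ι) (p : ι → Prop)
    [DecidablePred p] (x : ι → ℝ) (hx : ∀ i, x i = 0 ∨ x i = 1)
    (hsum : 1 ≤ ∑ i ∈ s, if p i then x i else 0) : ∃ i ∈ s, p i ∧ x i = 1 := by
  obtain ⟨i, hi, hne⟩ := Finset.exists_ne_zero_of_sum_ne_zero (by linarith : _ ≠ (0 : ℝ))
  have hp : p i := by_contra fun h => hne (if_neg h)
  exact ⟨i, hi, hp, (hx i).resolve_left fun h0 => hne (by rw [if_pos hp, h0])⟩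

/- Each chosen link is replaced by all its pieces in `σ`. A piece covers exactly those arcs
of its own path that the original link covers, and the pieces' paths exhaust the original
path, so the pieces of the chosen links still cover every arc; their total cost is at most
`Σ_ℓ (Σ_{ℓ' ∈ σ ℓ} c ℓ') x_ℓ`, strictly less when chosen links share a piece. -/

theorem Finset.sum_biUnion_le_sum_sum {ι α M : Type*} [DecidableEq α]
    [AddCommMonoid M] [PartialOrder M] [IsOrderedAddMonoid M]
    {f : α → M} (hf : ∀ a, 0 ≤ f a) (s : Finset ι) (t : ι → Finset α) :
    ∑ a ∈ s.biUnion t, f a ≤ ∑ i ∈ s, ∑ a ∈ t i, f a := by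
  have himage : s.biUnion t = (s.sigma t).image Sigma.snd := by ext; simp
  rw [himage]
  exact (Finset.sum_image_le_of_nonneg fun a _ => hf a).trans_eq
    (Finset.sum_sigma s t fun p => f p.2)

theorem Finset.sum_mul_eq_sum_filter_eq_one {ι R : Type*} [Semiring R] (s : Finset ι)
    (w x : ι → R) (hx : ∀ i, x i = 0 ∨ x i = 1) [DecidablePred fun i => x i = 1] :
    ∑ i ∈ s, w i * x i = ∑ i ∈ s with x i = 1, w i := by
  rw [Finset.sum_filter]
  refine Finset.sum_congr rfl fun i _ => ?_
  by_cases h1 : x i = 1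
  · rw [if_pos h1, h1, mul_one]
  · rw [if_neg h1, (hx i).resolve_right h1, mul_zero]

namespace ArcTree

variable {V : Type*} (T : ArcTree V)

theorem anc_trans_s15 {a b c : V} (hab : T.anc a b) (hbc : T.anc b c) : T.anc a c := by
  obtain ⟨n, hn⟩ := hab
  obtain ⟨m, hm⟩ := hbc
  exact ⟨n + m, by rw [Function.iterate_add_apply, hm, hn]⟩

end ArcTree

section Cover

variable {V : Type*} {T : ArcTree V} {up : V → Bool}

theorem covers.arcOnPath {ℓ : V × V} {z : V} (h : covers T up ℓ z) :
    T.arcOnPath ℓ.1 ℓ.2 z := by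
  refine ⟨h.1, fun hiff => ?_⟩
  rcases h.2 with ⟨h2, h1, -⟩ | ⟨h1, h2, -⟩
  · exact h1 (hiff.2 h2)
  · exact h2 (hiff.1 h1)

theorem IsShadow.covers {ℓ ℓ' : V × V} {z : V} (hsh : IsShadow T ℓ ℓ')
    (harc : T.arcOnPath ℓ'.1 ℓ'.2 z) (hcov : covers T up ℓ z) : covers T up ℓ' z := by
  obtain ⟨-, hfirst, hlca⟩ := hsh
  obtain ⟨hz, hxor⟩ := harc
  refine ⟨hz, ?_⟩
  rcases hcov.2 with ⟨h2, -, hup⟩ | ⟨h1, h2, hup⟩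
  · have hn1 : ¬ T.anc z ℓ'.1 := fun h => hxor (iff_of_true h (hlca z h h2))
    exact Or.inl ⟨by_contra fun h => hxor (iff_of_false hn1 h), hn1, hup⟩
  · have hn2 : ¬ T.anc z ℓ'.2 := fun h => hfirst.elim
      (fun h' => hxor (iff_of_true (T.anc_trans_s15 h h') h)) (fun h' => h2 (T.anc_trans_s15 h h'))
    exact Or.inr ⟨by_contra fun h => hxor (iff_of_false h hn2), hn2, hup⟩

theorem IsSplitting.exists_mem_covers {σ : V × V → Finset (V × V)} (hσ : IsSplitting T σ)
    {ℓ : V × V} {z : V} (hcov : covers T up ℓ z) : ∃ ℓ' ∈ σ ℓ, covers T up ℓ' z := by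
  obtain ⟨ℓ', hmem, harc⟩ := ((hσ ℓ).2.2.1 z).1 hcov.arcOnPath
  exact ⟨ℓ', hmem, ((hσ ℓ).2.1 ℓ' hmem).1.covers harc hcov⟩

end Cover

/-- Validity of the modification inequality: for every splitting `σ`,
every arc set `A'` and every integral feasible solution `x`, the contracted instance
(arcs outside `A'` must be covered, links restricted to `supp(σ)`) admits a solution of
cost at most `Σ_ℓ (Σ_{ℓ' ∈ σ(ℓ)} c(ℓ'))·x_ℓ`; hence the inequality
`Σ_ℓ (Σ_{ℓ' ∈ σ(ℓ)} c(ℓ'))·x_ℓ ≥ c(OPT(T/A', supp(σ)/A'))` is valid for the integer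
hull of the set-covering LP. -/
theorem modification_inequality_valid {V : Type*} [Fintype V]
    (T : ArcTree V) (up : V → Bool)
    (c : V × V → ℝ) (hc : ∀ ℓ, 0 < c ℓ)
    (σ : V × V → Finset (V × V)) (hσ : IsSplitting T σ) (A' : Set V)
    (x : V × V → ℝ) (hx01 : ∀ ℓ, x ℓ = 0 ∨ x ℓ = 1)
    (hxfeas : ∀ z, z ≠ T.root → 1 ≤ ∑ ℓ : V × V, if covers T up ℓ z then x ℓ else 0) :
    ∃ F : Finset (V × V),
      (∀ ℓ ∈ F, ∃ ℓ₀ : V × V, ℓ ∈ σ ℓ₀) ∧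
      (∀ z, z ≠ T.root → z ∉ A' → ∃ ℓ ∈ F, covers T up ℓ z) ∧
      (∑ ℓ ∈ F, c ℓ) ≤ ∑ ℓ : V × V, (∑ ℓ' ∈ σ ℓ, c ℓ') * x ℓ := by
  set chosen : Finset (V × V) := {ℓ | x ℓ = 1}
  refine ⟨chosen.biUnion σ, fun ℓ' hℓ' => ?_, fun z hz _ => ?_, ?_⟩
  · obtain ⟨ℓ, -, hmem⟩ := Finset.mem_biUnion.1 hℓ'
    exact ⟨ℓ, hmem⟩
  · obtain ⟨ℓ, -, hcov, hchosen⟩ :=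
      Finset.exists_mem_eq_one_of_one_le_sum_ite _ _ x hx01 (hxfeas z hz)
    obtain ⟨ℓ', hmem, hcov'⟩ := hσ.exists_mem_covers hcov
    exact ⟨ℓ', Finset.mem_biUnion.2 ⟨ℓ, by simpa [chosen] using hchosen, hmem⟩, hcov'⟩
  · rw [Finset.sum_mul_eq_sum_filter_eq_one _ _ _ hx01]
    exact Finset.sum_biUnion_le_sum_sum (fun ℓ => (hc ℓ).le) chosen σ
end
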